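/- arXiv:1803.01311 — 6 statements merged into one kernel-verified Lean document; each statement's English description precedes it below -/
import Mathlib

section
/- In the n-dimensional folded hypercube FQ_n with n ≥ 4, any two distinct vertices have either zero or exactly two common neighbours. -/
/-- The `n`-dimensional folded hypercube: vertices are binary strings of length `n`,
adjacent iff they differ in exactly one coordinate or in all coordinates. -/
def foldedCube (n : ℕ) : SimpleGraph (Fin n → Bool) :=
  SimpleGraph.fromRel (fun u v =>
    (Finset.univ.filter (fun i => u i ≠ v i)).card = 1 ∨ ∀ i, u i ≠ v i)

/-- External neighbourhood of a vertex set. -/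
def extNbhd {V : Type*} (G : SimpleGraph V) (S : Set V) : Set V :=
  {w | w ∉ S ∧ ∃ v ∈ S, G.Adj v w}

namespace FCaux

variable {n : ℕ}

def diffF (u v : Fin n → Bool) : Finset (Fin n) :=
  Finset.univ.filter (fun i => u i ≠ v i)

lemma mem_diffF {u v : Fin n → Bool} {i : Fin n} : i ∈ diffF u v ↔ u i ≠ v i := by
  simp [diffF]

lemma diffF_comm (u v : Fin n → Bool) : diffF u v = diffF v u := by
  ext i; simp [mem_diffF, ne_comm]

lemma diffF_eq_empty {u v : Fin n → Bool} : diffF u v = ∅ ↔ u = v := by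
  simp [Finset.eq_empty_iff_forall_notMem, mem_diffF, funext_iff]

lemma eq_of_diffF_eq {u w w' : Fin n → Bool} (h : diffF u w = diffF u w') : w = w' := by
  funext j
  have h2 := Finset.ext_iff.mp h j
  simp only [mem_diffF] at h2
  revert h2
  cases u j <;> cases w j <;> cases w' j <;> simp

lemma adj_iff (hn : 1 ≤ n) (u w : Fin n → Bool) :
    (foldedCube n).Adj u w ↔ (diffF u w).card = 1 ∨ diffF u w = Finset.univ := by
  have hsymm : ∀ a b : Fin n → Bool, diffF a b = diffF b a := diffF_comm
  constructor
  · rintro ⟨hne, h | h⟩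
    · rcases h with h | h
      · exact Or.inl h
      · exact Or.inr (Finset.eq_univ_iff_forall.mpr fun i => mem_diffF.mpr (h i))
    · rcases h with h | h
      · exact Or.inl (by rw [diffF_comm]; exact h)
      · exact Or.inr (Finset.eq_univ_iff_forall.mpr fun i => mem_diffF.mpr (fun he => h i he.symm))
  · intro h
    have hne : u ≠ w := by
      intro he; subst he
      have h0 : diffF u u = ∅ := diffF_eq_empty.mpr rfl
      rcases h with h | h
      · rw [h0] at h; simp at h
      · rw [h0] at h
        have : Nonempty (Fin n) := ⟨⟨0, hn⟩⟩
        exact Finset.univ_nonempty.ne_empty h.symm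
    refine ⟨hne, Or.inl ?_⟩
    rcases h with h | h
    · exact Or.inl h
    · exact Or.inr fun i => mem_diffF.mp (h ▸ Finset.mem_univ i)


def flp (u : Fin n → Bool) (i : Fin n) : Fin n → Bool := Function.update u i (!u i)

def cmpl (u : Fin n → Bool) : Fin n → Bool := fun j => !u j

lemma diffF_flp (u : Fin n → Bool) (i : Fin n) : diffF u (flp u i) = {i} := by
  ext j
  by_cases h : j = i
  · subst h; simp [mem_diffF, flp]
  · simp [mem_diffF, flp, Function.update_of_ne h, h]

lemma diffF_cmpl (u : Fin n → Bool) : diffF u (cmpl u) = Finset.univ := by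
  ext j; simp [mem_diffF, cmpl]

lemma diffF_flp_mem {u v : Fin n → Bool} {i : Fin n} (hi : i ∈ diffF u v) :
    diffF v (flp u i) = (diffF u v).erase i := by
  rw [mem_diffF] at hi
  ext j
  by_cases h : j = i
  · subst h
    simp only [mem_diffF, flp, Function.update_self, Finset.mem_erase, ne_eq, not_true_eq_false,
      false_and, iff_false, not_not]
    revert hi; cases u j <;> cases v j <;> simp
  · simp [mem_diffF, flp, Function.update_of_ne h, h, ne_comm]

lemma diffF_flp_notMem {u v : Fin n → Bool} {i : Fin n} (hi : i ∉ diffF u v) :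
    diffF v (flp u i) = insert i (diffF u v) := by
  rw [mem_diffF, not_not] at hi
  ext j
  by_cases h : j = i
  · subst h
    simp only [mem_diffF, flp, Function.update_self, Finset.mem_insert, true_or, iff_true]
    rw [hi]; cases v j <;> simp
  · simp [mem_diffF, flp, Function.update_of_ne h, h, ne_comm]

lemma diffF_cmpl' (u v : Fin n → Bool) : diffF v (cmpl u) = (diffF u v)ᶜ := by
  ext j
  simp only [mem_diffF, cmpl, Finset.mem_compl, mem_diffF, not_not]
  cases u j <;> cases v j <;> simp


lemma classify (hn1 : 1 ≤ n) {u v w : Fin n → Bool}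
    (h : (foldedCube n).Adj u w ∧ (foldedCube n).Adj v w) :
    (∃ k, w = flp u k ∧ ((diffF v (flp u k)).card = 1 ∨ diffF v (flp u k) = Finset.univ)) ∨
    (w = cmpl u ∧ ((diffF u v)ᶜ.card = 1 ∨ (diffF u v)ᶜ = Finset.univ)) := by
  obtain ⟨h1, h2⟩ := h
  rw [adj_iff hn1] at h1 h2
  rcases h1 with h1 | h1
  · obtain ⟨k, hk⟩ := Finset.card_eq_one.mp h1
    have hw : w = flp u k := eq_of_diffF_eq (by rw [hk, diffF_flp])
    subst hw
    exact Or.inl ⟨k, rfl, h2⟩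
  · have hw : w = cmpl u := eq_of_diffF_eq (by rw [h1, diffF_cmpl])
    subst hw
    rw [diffF_cmpl'] at h2
    exact Or.inr ⟨rfl, h2⟩

end FCaux

theorem stmt0 (n : ℕ) (hn : 4 ≤ n) (u v : Fin n → Bool) (huv : u ≠ v) :
    {w | (foldedCube n).Adj u w ∧ (foldedCube n).Adj v w}.ncard = 0 ∨
    {w | (foldedCube n).Adj u w ∧ (foldedCube n).Adj v w}.ncard = 2 := by
  classical
  open FCaux in
  have hn1 : 1 ≤ n := by omega
  have hDne : (FCaux.diffF u v).Nonempty := Finset.nonempty_iff_ne_empty.mpr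
    (fun h => huv (FCaux.diffF_eq_empty.mp h))
  have hDpos : 1 ≤ (FCaux.diffF u v).card := Finset.card_pos.mpr hDne
  have hDle : (FCaux.diffF u v).card ≤ n := by
    simpa using Finset.card_le_card (Finset.subset_univ (FCaux.diffF u v))
  have hcompl : (FCaux.diffF u v)ᶜ.card = n - (FCaux.diffF u v).card := by
    rw [Finset.card_compl]; simp
  have huniv_card : ∀ A : Finset (Fin n), A = Finset.univ → A.card = n := by
    intro A hA; rw [hA]; simp
  by_cases hd2 : (FCaux.diffF u v).card = 2
  · -- two common neighbours: flip at the two differing coordinates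
    right
    obtain ⟨i, j, hij, hD⟩ := Finset.card_eq_two.mp hd2
    have hiD : i ∈ (FCaux.diffF u v) := by rw [hD]; simp
    have hjD : j ∈ (FCaux.diffF u v) := by rw [hD]; simp
    have hSet : {w | (foldedCube n).Adj u w ∧ (foldedCube n).Adj v w} =
        {FCaux.flp u i, FCaux.flp u j} := by
      ext w
      simp only [Set.mem_setOf_eq, Set.mem_insert_iff, Set.mem_singleton_iff]
      constructor
      · intro h
        rcases FCaux.classify hn1 h with ⟨k, hw, hk⟩ | ⟨hw, hk⟩
        · by_cases hkD : k ∈ (FCaux.diffF u v)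
          · rw [hD] at hkD
            simp only [Finset.mem_insert, Finset.mem_singleton] at hkD
            rcases hkD with rfl | rfl
            · exact Or.inl hw
            · exact Or.inr hw
          · rw [FCaux.diffF_flp_notMem hkD] at hk
            have hc : (insert k (FCaux.diffF u v)).card = 3 := by
              rw [Finset.card_insert_of_notMem hkD, hd2]
            rcases hk with hk | hk
            · omega
            · have := huniv_card _ hk; omega
        · rcases hk with hk | hk
          · omega
          · have := huniv_card _ hk; omega
      · rintro (rfl | rfl)
        · constructor
          · rw [FCaux.adj_iff hn1, FCaux.diffF_flp]
            exact Or.inl (Finset.card_singleton i)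
          · rw [FCaux.adj_iff hn1, FCaux.diffF_flp_mem hiD]
            refine Or.inl ?_
            rw [Finset.card_erase_of_mem hiD, hd2]
        · constructor
          · rw [FCaux.adj_iff hn1, FCaux.diffF_flp]
            exact Or.inl (Finset.card_singleton j)
          · rw [FCaux.adj_iff hn1, FCaux.diffF_flp_mem hjD]
            refine Or.inl ?_
            rw [Finset.card_erase_of_mem hjD, hd2]
    rw [hSet]
    refine Set.ncard_pair ?_
    intro he
    have he' := congrFun he i
    simp [FCaux.flp, Function.update_of_ne hij] at he'
  · by_cases hdn : (FCaux.diffF u v).card = n - 1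
    · -- two common neighbours: complement of u and complement of v
      right
      have hc1 : (FCaux.diffF u v)ᶜ.card = 1 := by omega
      obtain ⟨i0, hi0⟩ := Finset.card_eq_one.mp hc1
      have hi0D : i0 ∉ (FCaux.diffF u v) := by
        have : i0 ∈ (FCaux.diffF u v)ᶜ := by rw [hi0]; simp
        simpa using this
      have hins : insert i0 (FCaux.diffF u v) = Finset.univ := by
        apply Finset.eq_univ_of_card
        rw [Finset.card_insert_of_notMem hi0D]
        simp; omega
      have hSet : {w | (foldedCube n).Adj u w ∧ (foldedCube n).Adj v w} =
          {FCaux.flp u i0, FCaux.cmpl u} := by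
        ext w
        simp only [Set.mem_setOf_eq, Set.mem_insert_iff, Set.mem_singleton_iff]
        constructor
        · intro h
          rcases FCaux.classify hn1 h with ⟨k, hw, hk⟩ | ⟨hw, hk⟩
          · by_cases hkD : k ∈ (FCaux.diffF u v)
            · rw [FCaux.diffF_flp_mem hkD] at hk
              have hc : ((FCaux.diffF u v).erase k).card = n - 2 := by
                rw [Finset.card_erase_of_mem hkD]; omega
              rcases hk with hk | hk
              · omega
              · have := huniv_card _ hk; omega
            · have : k ∈ (FCaux.diffF u v)ᶜ := by simpa using hkD
              rw [hi0, Finset.mem_singleton] at this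
              subst this
              exact Or.inl hw
          · exact Or.inr hw
        · rintro (rfl | rfl)
          · constructor
            · rw [FCaux.adj_iff hn1, FCaux.diffF_flp]
              exact Or.inl (Finset.card_singleton i0)
            · rw [FCaux.adj_iff hn1, FCaux.diffF_flp_notMem hi0D]
              exact Or.inr hins
          · constructor
            · rw [FCaux.adj_iff hn1, FCaux.diffF_cmpl]
              exact Or.inr rfl
            · rw [FCaux.adj_iff hn1, FCaux.diffF_cmpl']
              exact Or.inl (by rw [hi0]; simp)
      rw [hSet]
      refine Set.ncard_pair ?_
      intro he
      obtain ⟨j, hj⟩ := hDne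
      have hji0 : j ≠ i0 := fun h => hi0D (h ▸ hj)
      have he' := congrFun he j
      simp [FCaux.flp, FCaux.cmpl, Function.update_of_ne hji0] at he'
    · -- no common neighbours
      left
      have hSet : {w | (foldedCube n).Adj u w ∧ (foldedCube n).Adj v w} = ∅ := by
        ext w
        simp only [Set.mem_setOf_eq, Set.mem_empty_iff_false, iff_false]
        intro h
        rcases FCaux.classify hn1 h with ⟨k, hw, hk⟩ | ⟨hw, hk⟩
        · by_cases hkD : k ∈ (FCaux.diffF u v)
          · rw [FCaux.diffF_flp_mem hkD] at hk
            have hc : ((FCaux.diffF u v).erase k).card = (FCaux.diffF u v).card - 1 := Finset.card_erase_of_mem hkD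
            rcases hk with hk | hk
            · omega
            · have := huniv_card _ hk; omega
          · rw [FCaux.diffF_flp_notMem hkD] at hk
            have hc : (insert k (FCaux.diffF u v)).card = (FCaux.diffF u v).card + 1 := Finset.card_insert_of_notMem hkD
            rcases hk with hk | hk
            · omega
            · have := huniv_card _ hk; omega
        · rcases hk with hk | hk
          · omega
          · have := huniv_card _ hk; omega
      rw [hSet, Set.ncard_empty]
end

section
/- In the n-dimensional folded hypercube FQ_n with n ≥ 4, if two vertices are at distance 2, then they have exactly two common neighbours; if their distance is not 2, they have no common neighbour. -/
open Finset

namespace FQ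

variable {n : ℕ}

def D (u v : Fin n → Bool) : Finset (Fin n) := univ.filter (fun i => u i ≠ v i)

lemma mem_D {u v : Fin n → Bool} {i : Fin n} : i ∈ D u v ↔ u i ≠ v i := by simp [D]

lemma D_comm (u v : Fin n → Bool) : D u v = D v u := by
  ext i; simp only [mem_D]; exact ne_comm

lemma D_card_n {u v : Fin n → Bool} : (D u v).card = n ↔ ∀ i, u i ≠ v i := by
  constructor
  · intro h i
    have he : D u v = univ := Finset.eq_univ_of_card _ (by simpa using h)
    exact mem_D.mp (he ▸ Finset.mem_univ i)
  · intro h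
    have : D u v = univ := Finset.eq_univ_of_forall (fun i => mem_D.mpr (h i))
    simp [this]

lemma adj_iff {u v : Fin n → Bool} :
    (foldedCube n).Adj u v ↔ u ≠ v ∧ ((D u v).card = 1 ∨ (D u v).card = n) := by
  rw [foldedCube, SimpleGraph.fromRel_adj]
  have h1 : D v u = D u v := D_comm v u
  constructor
  · rintro ⟨hne, h | h⟩
    · refine ⟨hne, h.imp (fun h => h) (fun h => D_card_n.mpr h)⟩
    · refine ⟨hne, ?_⟩
      rcases h with h | h
      · left; rw [show (univ.filter (fun i => v i ≠ u i)) = D v u from rfl, h1] at h; exact h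
      · right; exact D_card_n.mpr (fun i => (h i).symm)
  · rintro ⟨hne, h | h⟩
    · exact ⟨hne, Or.inl (Or.inl h)⟩
    · exact ⟨hne, Or.inl (Or.inr (D_card_n.mp h))⟩

lemma D_eq_empty_iff {u v : Fin n → Bool} : D u v = ∅ ↔ u = v := by
  constructor
  · intro h
    funext i
    by_contra hi
    exact absurd (mem_D.mpr hi) (by simp [h])
  · intro h; subst h; ext i; simp [mem_D]

def flip (u : Fin n → Bool) (a : Fin n) : Fin n → Bool := Function.update u a (!(u a))

def cpl (u : Fin n → Bool) : Fin n → Bool := fun i => !(u i)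

lemma flip_apply_same (u : Fin n → Bool) (a : Fin n) : flip u a a = !(u a) := by
  simp [flip]

lemma flip_apply_ne (u : Fin n → Bool) {a i : Fin n} (h : i ≠ a) : flip u a i = u i := by
  simp [flip, Function.update_of_ne h]

lemma D_flip (u : Fin n → Bool) (a : Fin n) : D u (flip u a) = {a} := by
  ext i
  simp only [mem_D, Finset.mem_singleton]
  rcases eq_or_ne i a with rfl | h
  · simp [flip_apply_same]
  · simp [flip_apply_ne u h, h]

lemma D_cpl (u v : Fin n → Bool) : D u (cpl v) = (D u v)ᶜ := by
  ext i
  simp only [mem_D, Finset.mem_compl, cpl]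
  cases u i <;> cases v i <;> simp

/-- Case analysis: both distances 1. -/
lemma caseA {u v w : Fin n → Bool} {a b : Fin n} (huv : u ≠ v)
    (hu : D u w = {a}) (hv : D v w = {b}) :
    a ≠ b ∧ D u v = {a, b} ∧ w = flip u a := by
  have hua : u a ≠ w a := mem_D.mp (hu ▸ Finset.mem_singleton_self a)
  have hvb : v b ≠ w b := mem_D.mp (hv ▸ Finset.mem_singleton_self b)
  have hui : ∀ i, i ≠ a → u i = w i := by
    intro i hi
    by_contra h
    exact hi (by simpa [hu] using mem_D.mpr h)
  have hvi : ∀ i, i ≠ b → v i = w i := by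
    intro i hi
    by_contra h
    exact hi (by simpa [hv] using mem_D.mpr h)
  have hab : a ≠ b := by
    rintro rfl
    apply huv
    funext i
    rcases eq_or_ne i a with rfl | hi
    · cases h1 : u i <;> cases h2 : v i <;> cases h3 : w i <;> simp_all
    · rw [hui i hi, hvi i hi]
  refine ⟨hab, ?_, ?_⟩
  · ext i
    simp only [mem_D, Finset.mem_insert, Finset.mem_singleton]
    rcases eq_or_ne i a with rfl | hia
    · refine ⟨fun _ => Or.inl rfl, fun _ => ?_⟩
      rw [hvi i hab]
      exact hua
    · rcases eq_or_ne i b with rfl | hib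
      · refine ⟨fun _ => Or.inr rfl, fun _ => ?_⟩
        rw [hui i hia]
        exact fun h => hvb h.symm
      · simp only [hia, hib, or_self, iff_false, ne_eq, not_not]
        rw [hui i hia, hvi i hib]
  · funext i
    rcases eq_or_ne i a with rfl | hi
    · rw [flip_apply_same]
      cases h1 : u i <;> cases h2 : w i <;> simp_all
    · rw [flip_apply_ne u hi, hui i hi]

lemma cpl_of_all_ne {v w : Fin n → Bool} (h : ∀ i, v i ≠ w i) : w = cpl v := by
  funext i
  have := h i
  cases h1 : v i <;> cases h2 : w i <;> simp_all [cpl]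

/-- the common neighbour set -/
def CN (n : ℕ) (u v : Fin n → Bool) : Set (Fin n → Bool) :=
  {w | (foldedCube n).Adj u w ∧ (foldedCube n).Adj v w}

lemma cn_subset (hn : 4 ≤ n) {u v : Fin n → Bool} (huv : u ≠ v) {w : Fin n → Bool}
    (hw : w ∈ CN n u v) :
    ((D u v).card = 2 ∧ ∃ a b, a ≠ b ∧ D u v = {a, b} ∧ (w = flip u a ∨ w = flip u b)) ∨
    ((D u v).card = n - 1 ∧ (w = cpl u ∨ w = cpl v)) := by
  obtain ⟨hu, hv⟩ := hw
  rw [adj_iff] at hu hv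
  obtain ⟨hu0, hu1⟩ := hu
  obtain ⟨hv0, hv1⟩ := hv
  rcases hu1 with hu1 | hu1
  · rcases hv1 with hv1 | hv1
    · -- both card 1
      obtain ⟨a, ha⟩ := Finset.card_eq_one.mp hu1
      obtain ⟨b, hb⟩ := Finset.card_eq_one.mp hv1
      obtain ⟨hab, hDuv, hw⟩ := caseA huv ha hb
      left
      refine ⟨by rw [hDuv]; rw [Finset.card_insert_of_notMem (by simpa using hab)]; simp, a, b, hab, hDuv, Or.inl hw⟩
    · -- u dist 1, v dist n : w = cpl v
      have hw : w = cpl v := cpl_of_all_ne (D_card_n.mp hv1)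
      right
      subst hw
      rw [D_cpl, Finset.card_compl] at hu1
      refine ⟨?_, Or.inr rfl⟩
      have hle : (D u v).card ≤ n := by
        simpa using Finset.card_le_card (Finset.subset_univ (D u v))
      simp only [Fintype.card_fin] at hu1
      omega
  · -- u dist n : w = cpl u
    have hw : w = cpl u := cpl_of_all_ne (D_card_n.mp hu1)
    subst hw
    rcases hv1 with hv1 | hv1
    · right
      rw [D_cpl v u, Finset.card_compl, D_comm v u] at hv1
      refine ⟨?_, Or.inl rfl⟩
      have hle : (D u v).card ≤ n := by
        simpa using Finset.card_le_card (Finset.subset_univ (D u v))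
      simp only [Fintype.card_fin] at hv1
      omega
    · -- both cpl: u = v
      exfalso
      apply huv
      have h1 := D_card_n.mp hv1
      funext i
      have := h1 i
      cases h2 : u i <;> cases h3 : v i <;> simp_all [cpl]

lemma adj_flip (u : Fin n → Bool) (a : Fin n) (hn : 2 ≤ n) :
    (foldedCube n).Adj u (flip u a) := by
  rw [adj_iff]
  constructor
  · intro h
    have : u a = flip u a a := congrFun h a
    rw [flip_apply_same] at this
    simp at this
  · left; rw [D_flip]; simp

lemma adj_cpl (u : Fin n → Bool) (hn : 1 ≤ n) :
    (foldedCube n).Adj u (cpl u) := by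
  rw [adj_iff]
  have hne : u ≠ cpl u := by
    intro h
    have : u ⟨0, hn⟩ = cpl u ⟨0, hn⟩ := congrFun h _
    simp [cpl] at this
  refine ⟨hne, Or.inr ?_⟩
  rw [D_cpl]
  have : D u u = ∅ := D_eq_empty_iff.mpr rfl
  rw [this]
  simp

lemma cn_card2 (hn : 4 ≤ n) {u v : Fin n → Bool} {a b : Fin n} (hab : a ≠ b)
    (hD : D u v = {a, b}) : CN n u v = {flip u a, flip u b} := by
  have huv : u ≠ v := by
    intro h
    rw [D_eq_empty_iff.mpr h] at hD
    exact absurd hD.symm (by simp)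
  ext w
  constructor
  · intro hw
    rcases cn_subset hn huv hw with ⟨_, a', b', hab', hD', hw'⟩ | ⟨hc, _⟩
    · rw [hD] at hD'
      have hmem : a' = a ∨ a' = b := by
        have : a' ∈ ({a, b} : Finset (Fin n)) := hD' ▸ Finset.mem_insert_self a' {b'}
        simpa using this
      have hmemb : b' = a ∨ b' = b := by
        have : b' ∈ ({a, b} : Finset (Fin n)) := hD' ▸ (by simp)
        simpa using this
      rcases hw' with rfl | rfl
      · rcases hmem with rfl | rfl
        · left; rfl
        · right; rfl
      · rcases hmemb with rfl | rfl
        · left; rfl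
        · right; rfl
    · exfalso
      have h2 : (D u v).card = 2 := by
        rw [hD, Finset.card_insert_of_notMem (by simpa using hab)]; simp
      omega
  · intro hw
    have h2n : 2 ≤ n := by omega
    have hva : D v (flip u a) = {b} := by
      ext i
      simp only [mem_D, Finset.mem_singleton]
      have hia : i ∈ D u v ↔ (i = a ∨ i = b) := by rw [hD]; simp
      rcases eq_or_ne i a with rfl | hia'
      · have : u i ≠ v i := mem_D.mp (by rw [hD]; simp)
        rw [flip_apply_same]
        constructor
        · intro h; exfalso; cases u i <;> cases v i <;> simp_all
        · intro h; exact absurd h hab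
      · rw [flip_apply_ne u hia']
        rcases eq_or_ne i b with rfl | hib
        · have : u i ≠ v i := mem_D.mp (by rw [hD]; simp)
          simpa using fun h => (this (h.symm)).elim
        · have : ¬ (u i ≠ v i) := fun h => by
            have := mem_D.mpr h
            rw [hD] at this
            simp at this
            tauto
          push_neg at this
          simp [this.symm, hib]
    have hvb : D v (flip u b) = {a} := by
      have hD' : D u v = {b, a} := by rw [hD]; ext i; simp; tauto
      ext i
      simp only [mem_D, Finset.mem_singleton]
      rcases eq_or_ne i b with rfl | hib'
      · have : u i ≠ v i := mem_D.mp (by rw [hD]; simp)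
        rw [flip_apply_same]
        constructor
        · intro h; exfalso; cases u i <;> cases v i <;> simp_all
        · intro h; exact absurd h.symm hab
      · rw [flip_apply_ne u hib']
        rcases eq_or_ne i a with rfl | hia
        · have : u i ≠ v i := mem_D.mp (by rw [hD]; simp)
          simpa using fun h => (this (h.symm)).elim
        · have : ¬ (u i ≠ v i) := fun h => by
            have := mem_D.mpr h
            rw [hD] at this
            simp at this
            tauto
          push_neg at this
          simp [this.symm, hia]
    rcases hw with rfl | rfl
    · refine ⟨adj_flip u a h2n, ?_⟩
      rw [adj_iff]
      refine ⟨?_, Or.inl (by rw [hva]; simp)⟩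
      intro h
      rw [← h] at hva
      rw [D_eq_empty_iff.mpr rfl] at hva
      exact absurd hva.symm (by simp)
    · refine ⟨adj_flip u b h2n, ?_⟩
      rw [adj_iff]
      refine ⟨?_, Or.inl (by rw [hvb]; simp)⟩
      intro h
      rw [← h] at hvb
      rw [D_eq_empty_iff.mpr rfl] at hvb
      exact absurd hvb.symm (by simp)

lemma cn_cardn1 (hn : 4 ≤ n) {u v : Fin n → Bool} (huv : u ≠ v)
    (hD : (D u v).card = n - 1) : CN n u v = {cpl u, cpl v} := by
  ext w
  constructor
  · intro hw
    rcases cn_subset hn huv hw with ⟨h2, _⟩ | ⟨_, hw'⟩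
    · omega
    · rcases hw' with rfl | rfl
      · left; rfl
      · right; rfl
  · intro hw
    have h1n : 1 ≤ n := by omega
    rcases hw with rfl | rfl
    · refine ⟨adj_cpl u h1n, ?_⟩
      rw [adj_iff]
      have hc : D v (cpl u) = (D v u)ᶜ := D_cpl v u
      constructor
      · intro h
        rw [← h, D_eq_empty_iff.mpr rfl] at hc
        have huniv : D v u = univ := by
          have := congrArg (·ᶜ) hc.symm
          simpa using this
        have hcard : (D u v).card = n := by
          rw [D_comm u v, huniv]; simp
        omega
      · left
        rw [hc, Finset.card_compl, D_comm v u, hD]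
        simp
        omega
    · refine ⟨?_, adj_cpl v h1n⟩
      rw [adj_iff]
      have hc : D u (cpl v) = (D u v)ᶜ := D_cpl u v
      constructor
      · intro h
        rw [← h, D_eq_empty_iff.mpr rfl] at hc
        have huniv : D u v = univ := by
          have := congrArg (·ᶜ) hc.symm
          simpa using this
        have hcard : (D u v).card = n := by rw [huniv]; simp
        omega
      · left
        rw [hc, Finset.card_compl, hD]
        simp
        omega

lemma cn_empty (hn : 4 ≤ n) {u v : Fin n → Bool} (huv : u ≠ v)
    (h2 : (D u v).card ≠ 2) (hn1 : (D u v).card ≠ n - 1) : CN n u v = ∅ := by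
  ext w
  simp only [Set.mem_empty_iff_false, iff_false]
  intro hw
  rcases cn_subset hn huv hw with ⟨h, _⟩ | ⟨h, _⟩
  · exact h2 h
  · exact hn1 h

lemma cn_ncard_two (hn : 4 ≤ n) {u v : Fin n → Bool} (huv : u ≠ v)
    (h : (D u v).card = 2 ∨ (D u v).card = n - 1) : (CN n u v).ncard = 2 := by
  rcases h with h | h
  · obtain ⟨a, b, hab, hD⟩ := Finset.card_eq_two.mp h
    rw [cn_card2 hn hab hD]
    apply Set.ncard_pair
    intro he
    have h1 := congrFun he a
    have h2 := congrFun he b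
    rw [flip_apply_same, flip_apply_ne u hab] at h1
    simp at h1
  · rw [cn_cardn1 hn huv h]
    apply Set.ncard_pair
    intro he
    apply huv
    funext i
    have := congrFun he i
    cases h1 : u i <;> cases h2 : v i <;> simp_all [cpl]

lemma not_adj_of (hn : 4 ≤ n) {u v : Fin n → Bool}
    (h : (D u v).card = 2 ∨ (D u v).card = n - 1) : ¬ (foldedCube n).Adj u v := by
  rw [adj_iff]
  rintro ⟨_, h1 | h1⟩ <;> omega

theorem stmt1' (n : ℕ) (hn : 4 ≤ n) (u v : Fin n → Bool) (huv : u ≠ v) :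
    ((foldedCube n).dist u v = 2 →
      {w | (foldedCube n).Adj u w ∧ (foldedCube n).Adj v w}.ncard = 2) ∧
    ((foldedCube n).dist u v ≠ 2 →
      {w | (foldedCube n).Adj u w ∧ (foldedCube n).Adj v w}.ncard = 0) := by
  have key : (foldedCube n).dist u v = 2 ↔
      ((D u v).card = 2 ∨ (D u v).card = n - 1) := by
    constructor
    · intro hd
      -- get a walk of length 2
      obtain ⟨p, hp⟩ := SimpleGraph.exists_walk_of_dist_ne_zero (G := foldedCube n) (u := u) (v := v) (by omega)
      rw [hd] at hp
      by_contra hcon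
      push_neg at hcon
      have hempty : CN n u v = ∅ := cn_empty hn huv hcon.1 hcon.2
      -- extract middle vertex
      cases p with
      | nil => simp at hp
      | @cons _ w _ h q =>
        cases q with
        | nil => simp at hp
        | @cons _ x _ h2 q2 =>
          cases q2 with
          | nil =>
            have : w ∈ CN n u v := ⟨h, h2.symm⟩
            rw [hempty] at this
            exact this
          | cons h3 q3 => simp [SimpleGraph.Walk.length_cons] at hp
    · intro h
      have hcn : (CN n u v).ncard = 2 := cn_ncard_two hn huv h
      have hne : (CN n u v).Nonempty := by
        rw [← Set.ncard_pos]
        omega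
      obtain ⟨w, hw1, hw2⟩ := hne
      have hle : (foldedCube n).dist u v ≤ 2 := by
        have := SimpleGraph.dist_le
          (SimpleGraph.Walk.cons hw1 (SimpleGraph.Walk.cons hw2.symm SimpleGraph.Walk.nil))
        simpa using this
      have hne0 : (foldedCube n).dist u v ≠ 0 := by
        rw [SimpleGraph.dist_ne_zero_iff_ne_and_reachable]
        exact ⟨huv, ⟨SimpleGraph.Walk.cons hw1 (SimpleGraph.Walk.cons hw2.symm SimpleGraph.Walk.nil)⟩⟩
      have hne1 : (foldedCube n).dist u v ≠ 1 := by
        rw [ne_eq, SimpleGraph.dist_eq_one_iff_adj]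
        exact not_adj_of hn h
      omega
  constructor
  · intro hd
    exact cn_ncard_two hn huv (key.mp hd)
  · intro hd
    have : ¬ ((D u v).card = 2 ∨ (D u v).card = n - 1) := fun h => hd (key.mpr h)
    push_neg at this
    rw [show {w | (foldedCube n).Adj u w ∧ (foldedCube n).Adj v w} = CN n u v from rfl,
      cn_empty hn huv this.1 this.2]
    simp

end FQ

theorem stmt1 (n : ℕ) (hn : 4 ≤ n) (u v : Fin n → Bool) (huv : u ≠ v) :
    ((foldedCube n).dist u v = 2 →
      {w | (foldedCube n).Adj u w ∧ (foldedCube n).Adj v w}.ncard = 2) ∧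
    ((foldedCube n).dist u v ≠ 2 →
      {w | (foldedCube n).Adj u w ∧ (foldedCube n).Adj v w}.ncard = 0) := by
  exact FQ.stmt1' n hn u v huv
end

section
/- For n ≥ 4, any set V' of two vertices in the folded hypercube FQ_n has at least 2n neighbours outside V', i.e., |N_{FQ_n}(V')| ≥ 2n. -/
/-!
The folded cube `FQ_n` is `(n + 1)`-regular. Two vertices `u ≠ v` with a common neighbour differ
in exactly `2` or exactly `n - 1` coordinates, since the coordinate sets in which `u` and `v`
differ from that neighbour are singletons or everything. Adjacent vertices differ in `1` or `n`
coordinates, so the graph is triangle-free for `n ≥ 3`; and for `n ≥ 4` two vertices have at most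
two common neighbours: the two intermediate one-bit flips, or the two complements. Hence
`N(u) ∪ N(v)` has at least `2(n + 1) - 2` elements outside `{u, v}`: when `u ~ v` the union is
disjoint but contains `u` and `v`, otherwise it avoids them and loses at most two elements to the
overlap.
-/

open Finset SimpleGraph
open scoped symmDiff

section ExternalNeighbourhood

variable {V : Type*} [DecidableEq V] {G : SimpleGraph V} [G.LocallyFinite]

lemma extNbhd_pair (u v : V) :
    extNbhd G {u, v} = ↑((G.neighborFinset u ∪ G.neighborFinset v) \ {u, v}) := by
  ext w
  simp only [extNbhd, Set.mem_insert_iff, Set.mem_singleton_iff, exists_eq_or_imp,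
    exists_eq_left, coe_sdiff, coe_union, coe_neighborFinset, coe_pair, Set.mem_sdiff,
    Set.mem_union, mem_neighborSet, Set.mem_ofPred_eq]
  tauto

lemma neighborFinset_inter_eq_empty_of_adj (htri : G.CliqueFree 3) {u v : V} (huv : G.Adj u v) :
    G.neighborFinset u ∩ G.neighborFinset v = ∅ := by
  refine eq_empty_iff_forall_notMem.2 fun w hw => ?_
  rw [mem_inter, mem_neighborFinset, mem_neighborFinset] at hw
  exact htri {u, v, w} (is3Clique_triple_iff.2 ⟨huv, hw.1, hw.2⟩)

lemma degree_add_degree_le_ncard_extNbhd_pair (htri : G.CliqueFree 3) {u v : V} (huv : u ≠ v)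
    (hcommon : #(G.neighborFinset u ∩ G.neighborFinset v) ≤ 2) :
    G.degree u + G.degree v ≤ (extNbhd G {u, v}).ncard + 2 := by
  rw [extNbhd_pair, Set.ncard_coe_finset, ← card_neighborFinset_eq_degree,
    ← card_neighborFinset_eq_degree, ← card_union_add_card_inter]
  by_cases hadj : G.Adj u v
  · have hsdiff := card_le_card_sdiff_add_card (s := G.neighborFinset u ∪ G.neighborFinset v)
      (t := {u, v})
    rw [card_pair huv] at hsdiff
    rw [neighborFinset_inter_eq_empty_of_adj htri hadj, card_empty]
    omega
  · have hdisj : Disjoint (G.neighborFinset u ∪ G.neighborFinset v) {u, v} := by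
      simp [hadj, G.adj_comm v u]
    rw [sdiff_eq_self_of_disjoint hdisj]
    omega

end ExternalNeighbourhood

section BoolFunctions

variable {ι : Type*}

lemma forall_ne_iff_eq_compl {u v : ι → Bool} : (∀ i, u i ≠ v i) ↔ v = uᶜ := by
  simp only [funext_iff, Pi.compl_apply]
  exact forall_congr' fun i => by cases u i <;> cases v i <;> decide

variable [Fintype ι]

def diffSet (u v : ι → Bool) : Finset ι := {i | u i ≠ v i}

def flipBit [DecidableEq ι] (u : ι → Bool) (i : ι) : ι → Bool := Function.update u i (!u i)

@[simp]
lemma mem_diffSet {u v : ι → Bool} {i : ι} : i ∈ diffSet u v ↔ u i ≠ v i := by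
  simp [diffSet]

lemma diffSet_comm (u v : ι → Bool) : diffSet u v = diffSet v u := by
  ext i
  simp [ne_comm]

lemma diffSet_eq_empty_iff {u v : ι → Bool} : diffSet u v = ∅ ↔ u = v := by
  simp [eq_empty_iff_forall_notMem, funext_iff]

lemma eq_of_diffSet_eq {u v w : ι → Bool} (h : diffSet u v = diffSet u w) : v = w := by
  funext i
  have := Finset.ext_iff.1 h i
  simp only [mem_diffSet] at this
  revert this
  cases u i <;> cases v i <;> cases w i <;> decide

lemma diffSet_symmDiff_diffSet [DecidableEq ι] (u v w : ι → Bool) :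
    diffSet u v ∆ diffSet v w = diffSet u w := by
  ext i
  simp only [mem_symmDiff, mem_diffSet]
  cases u i <;> cases v i <;> cases w i <;> simp

lemma diffSet_flipBit [DecidableEq ι] (u : ι → Bool) (i : ι) : diffSet u (flipBit u i) = {i} := by
  ext k
  by_cases h : k = i <;> simp [flipBit, h]

lemma diffSet_compl (u : ι → Bool) : diffSet u uᶜ = univ := by
  ext k
  simp

lemma diffSet_right_inj {u v w : ι → Bool} : diffSet u v = diffSet u w ↔ v = w :=
  ⟨eq_of_diffSet_eq, congrArg _⟩

lemma flipBit_injective [DecidableEq ι] (u : ι → Bool) : Function.Injective (flipBit u) := by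
  intro i j h
  simpa [diffSet_flipBit] using congrArg (diffSet u) h

end BoolFunctions

namespace foldedCube

variable {n : ℕ}

instance : DecidableRel (foldedCube n).Adj := by
  unfold foldedCube
  infer_instance

lemma adj_iff (hn : 0 < n) {u v : Fin n → Bool} :
    (foldedCube n).Adj u v ↔ (∃ i, v = flipBit u i) ∨ v = uᶜ := by
  have hrel : ∀ u v : Fin n → Bool, (#(diffSet u v) = 1 ∨ ∀ i, u i ≠ v i) ↔
      (∃ i, v = flipBit u i) ∨ v = uᶜ := fun u v => by
    simp only [card_eq_one, ← diffSet_flipBit u, diffSet_right_inj, forall_ne_iff_eq_compl]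
  rw [foldedCube, fromRel_adj]
  change u ≠ v ∧ ((#(diffSet u v) = 1 ∨ _) ∨ (#(diffSet v u) = 1 ∨ ∀ i, v i ≠ u i)) ↔ _
  simp only [diffSet_comm v u, ne_comm (a := v _), or_self, hrel, and_iff_right_iff_imp]
  rintro (⟨i, rfl⟩ | rfl) <;> rw [Ne, ← diffSet_eq_empty_iff, ← Ne, ← nonempty_iff_ne_empty]
  · simp [diffSet_flipBit]
  · simpa [diffSet_compl, univ_nonempty_iff] using Fin.pos_iff_nonempty.1 hn

lemma neighborFinset_eq (hn : 0 < n) (u : Fin n → Bool) :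
    (foldedCube n).neighborFinset u = insert uᶜ (univ.image (flipBit u)) := by
  ext w
  simp [adj_iff hn, eq_comm, or_comm]

lemma degree_eq (hn : 2 ≤ n) (u : Fin n → Bool) : (foldedCube n).degree u = n + 1 := by
  rw [← card_neighborFinset_eq_degree, neighborFinset_eq (by omega), card_insert_of_notMem,
    card_image_of_injective _ (flipBit_injective u), card_univ, Fintype.card_fin]
  rw [mem_image]
  rintro ⟨i, -, hi⟩
  have := congrArg (fun w => #(diffSet u w)) hi
  simp only [diffSet_flipBit, diffSet_compl, card_singleton, card_univ, Fintype.card_fin] at this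
  omega

lemma card_diffSet_of_adj (hn : 0 < n) {u v : Fin n → Bool} (h : (foldedCube n).Adj u v) :
    #(diffSet u v) = 1 ∨ #(diffSet u v) = n := by
  rcases (adj_iff hn).1 h with ⟨i, rfl⟩ | rfl <;> simp [diffSet_flipBit, diffSet_compl]

lemma common_neighbor_cases (hn : 0 < n) {u v w : Fin n → Bool} (huv : u ≠ v)
    (hu : (foldedCube n).Adj u w) (hv : (foldedCube n).Adj v w) :
    (#(diffSet u v) = 2 ∧ ∃ i ∈ diffSet u v, w = flipBit u i) ∨
      (#(diffSet u v) = n - 1 ∧ (w = uᶜ ∨ w = vᶜ)) := by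
  have hE : diffSet u v = diffSet u w ∆ diffSet v w := by
    rw [diffSet_comm v w, diffSet_symmDiff_diffSet]
  rcases (adj_iff hn).1 hu with ⟨i, rfl⟩ | rfl <;> rcases (adj_iff hn).1 hv with ⟨j, hj⟩ | hj
  · rw [diffSet_flipBit, hj, diffSet_flipBit] at hE
    have hij : Disjoint ({i} : Finset (Fin n)) {j} := by
      rw [disjoint_singleton]
      rintro rfl
      simp [diffSet_eq_empty_iff, huv] at hE
    rw [hij.symmDiff_eq_sup, sup_eq_union] at hE
    exact .inl ⟨by rw [hE, card_union_of_disjoint hij, card_singleton, card_singleton],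
      i, by simp [hE], rfl⟩
  · rw [diffSet_flipBit, hj, diffSet_compl, ← top_eq_univ, symmDiff_top] at hE
    exact .inr ⟨by simp [hE, card_compl], .inr hj⟩
  · rw [diffSet_compl, hj, diffSet_flipBit, ← top_eq_univ, top_symmDiff] at hE
    exact .inr ⟨by simp [hE, card_compl], .inl rfl⟩
  · exact absurd (compl_injective hj) huv

lemma cliqueFree_three (hn : 3 ≤ n) : (foldedCube n).CliqueFree 3 := by
  intro s hs
  obtain ⟨u, v, w, huv, huw, hvw, rfl⟩ := is3Clique_iff.1 hs
  have hadj := card_diffSet_of_adj (by omega) huv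
  rcases common_neighbor_cases (by omega) huv.ne huw hvw with ⟨h, -⟩ | ⟨h, -⟩ <;> omega

lemma card_neighborFinset_inter_le_two (hn : 4 ≤ n) {u v : Fin n → Bool} (huv : u ≠ v) :
    #((foldedCube n).neighborFinset u ∩ (foldedCube n).neighborFinset v) ≤ 2 := by
  have hcases (w) (hw : w ∈ (foldedCube n).neighborFinset u ∩ (foldedCube n).neighborFinset v) :=
    common_neighbor_cases (by omega) huv ((mem_neighborFinset ..).1 (mem_inter.1 hw).1)
      ((mem_neighborFinset ..).1 (mem_inter.1 hw).2)
  by_cases h2 : #(diffSet u v) = 2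
  · calc _ ≤ #((diffSet u v).image (flipBit u)) := card_le_card fun w hw => by
          rcases hcases w hw with ⟨-, i, hi, rfl⟩ | ⟨h, -⟩
          · exact mem_image_of_mem _ hi
          · omega
      _ ≤ #(diffSet u v) := card_image_le
      _ = 2 := h2
  · calc _ ≤ #({uᶜ, vᶜ} : Finset (Fin n → Bool)) := card_le_card fun w hw => by
          rcases hcases w hw with ⟨h, -⟩ | ⟨-, rfl | rfl⟩
          · exact absurd h h2
          · exact mem_insert_self _ _
          · exact mem_insert_of_mem (mem_singleton_self _)
      _ ≤ 2 := card_le_two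

end foldedCube

theorem stmt3 (n : ℕ) (hn : 4 ≤ n) (V' : Finset (Fin n → Bool)) (hV' : V'.card = 2) :
    2 * n ≤ (extNbhd (foldedCube n) (↑V' : Set (Fin n → Bool))).ncard := by
  obtain ⟨u, v, huv, rfl⟩ := card_eq_two.1 hV'
  have hbound := degree_add_degree_le_ncard_extNbhd_pair (foldedCube.cliqueFree_three (by omega))
    huv (foldedCube.card_neighborFinset_inter_le_two hn huv)
  rw [foldedCube.degree_eq (by omega), foldedCube.degree_eq (by omega)] at hbound
  rw [coe_pair]
  omega
end

section
/- For n ≥ 5 and 1 ≤ g ≤ n+2, if V' consists of a vertex v of FQ_n together with g−1 of its neighbours, then |N_{FQ_n}(V')| = g(n+1) − g(g+1)/2 + 1. -/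
/-!
The folded cube `FQ_n` is the Cayley graph of `(ℤ/2)^n` with the `n + 1` generators
`e_1, …, e_n, 1`. For `n ≥ 4` no generator is a sum of two others and a sum of two distinct
generators determines them, so `FQ_n` is an `(n+1)`-regular rectagraph: triangle-free, and any two
distinct vertices have `0` or `2` common neighbours.

In a `d`-regular rectagraph, let `V' = {v} ∪ U` with `U` a set of `k` neighbours of `v`. Outside
`V'`, the neighbourhood of `V'` consists of the `d - k` other neighbours of `v` and of the vertices
at distance two from `v` adjacent to `U`. Each `u ∈ U` has `d - 1` of the latter, two of them share
exactly one, and no three share any, so there are `k (d - 1) - C(k, 2)` of them. Altogether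
`|N(V')| + C(k + 2, 2) = (k + 1) d + 1`.
-/

open Finset
open scoped symmDiff

theorem Finset.card_biUnion_add_choose_two {ι α : Type*} [DecidableEq ι] [DecidableEq α]
    (A : ι → Finset α) (m : ℕ) (s : Finset ι) (hcard : ∀ i ∈ s, #(A i) = m)
    (hpair : ∀ i ∈ s, ∀ j ∈ s, i ≠ j → #(A i ∩ A j) = 1)
    (htriple : ∀ i ∈ s, ∀ j ∈ s, ∀ k ∈ s, i ≠ j → i ≠ k → j ≠ k →
      Disjoint (A i ∩ A j) (A k)) :
    #(s.biUnion A) + (#s).choose 2 = #s * m := by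
  induction s using Finset.induction_on with
  | empty => simp
  | insert i s hi ih =>
    have hs : ∀ j ∈ s, j ∈ insert i s := fun j hj => mem_insert_of_mem hj
    have hi' : i ∈ insert i s := mem_insert_self i s
    have hne : ∀ j ∈ s, i ≠ j := fun j hj h => hi (h ▸ hj)
    have hB := ih (fun j hj => hcard j (hs j hj)) (fun j hj k hk => hpair j (hs j hj) k (hs k hk))
      (fun j hj k hk l hl => htriple j (hs j hj) k (hs k hk) l (hs l hl))
    have hinter : #(A i ∩ s.biUnion A) = #s := by
      rw [inter_biUnion, card_biUnion, sum_congr rfl fun j hj => hpair i hi' j (hs j hj) (hne j hj),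
        sum_const, smul_eq_mul, mul_one]
      intro j hj k hk hjk
      exact (htriple i hi' j (hs j hj) k (hs k hk) (hne j hj) (hne k hk) hjk).mono_right
        inter_subset_right
    have hunion := card_union_add_card_inter (A i) (s.biUnion A)
    rw [hinter, hcard i hi'] at hunion
    rw [biUnion_insert, card_insert_of_notMem hi, Nat.choose_succ_succ, Nat.choose_one_right]
    linarith

namespace SimpleGraph

variable {V : Type*} (G : SimpleGraph V) [DecidableEq V] [G.LocallyFinite]

structure IsRectagraph : Prop where
  not_adj_of_adj_of_adj : ∀ ⦃x y z⦄, G.Adj x y → G.Adj y z → ¬ G.Adj x z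
  card_common_eq_zero_or_two : ∀ ⦃x y⦄, x ≠ y →
    #(G.neighborFinset x ∩ G.neighborFinset y) = 0 ∨
      #(G.neighborFinset x ∩ G.neighborFinset y) = 2

variable {G}

namespace IsRectagraph

variable (hG : G.IsRectagraph)
include hG

theorem card_common_le_two {x y : V} (hxy : x ≠ y) :
    #(G.neighborFinset x ∩ G.neighborFinset y) ≤ 2 := by
  rcases hG.card_common_eq_zero_or_two hxy with h | h <;> omega

theorem card_common_erase_eq_one {v u u' : V} (hu : G.Adj v u) (hu' : G.Adj v u')
    (huu' : u ≠ u') : #((G.neighborFinset u).erase v ∩ (G.neighborFinset u').erase v) = 1 := by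
  have hv : v ∈ G.neighborFinset u ∩ G.neighborFinset u' := by
    simp [hu.symm, hu'.symm]
  rw [erase_inter, inter_erase, erase_idem, card_erase_of_mem hv]
  rcases hG.card_common_eq_zero_or_two huu' with h | h
  · simp [card_eq_zero.1 h] at hv
  · rw [h]

theorem disjoint_common_erase {v u u' u'' : V} (hu : G.Adj v u) (hu' : G.Adj v u')
    (hu'' : G.Adj v u'') (huu' : u ≠ u') (huu'' : u ≠ u'') (hu'u'' : u' ≠ u'') :
    Disjoint ((G.neighborFinset u).erase v ∩ (G.neighborFinset u').erase v)
      ((G.neighborFinset u'').erase v) := by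
  refine Finset.disjoint_left.2 fun w hw hw'' => ?_
  simp only [mem_inter, mem_erase, mem_neighborFinset] at hw hw''
  have hsub : {u, u', u''} ⊆ G.neighborFinset v ∩ G.neighborFinset w := by
    intro x hx
    simp only [mem_insert, mem_singleton] at hx
    rw [mem_inter, mem_neighborFinset, mem_neighborFinset]
    rcases hx with rfl | rfl | rfl
    exacts [⟨hu, hw.1.2.symm⟩, ⟨hu', hw.2.2.symm⟩, ⟨hu'', hw''.2.symm⟩]
  have hcard := card_le_card hsub
  rw [card_eq_three.2 ⟨u, u', u'', huu', huu'', hu'u'', rfl⟩] at hcard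
  have := hG.card_common_le_two (Ne.symm hw.1.1)
  omega

theorem card_biUnion_erase_add_choose_two {d : ℕ} (hd : G.IsRegularOfDegree d) {v : V}
    {U : Finset V} (hU : ∀ u ∈ U, G.Adj v u) :
    #(U.biUnion fun u => (G.neighborFinset u).erase v) + (#U).choose 2 = #U * (d - 1) := by
  refine card_biUnion_add_choose_two _ _ _ (fun u hu => ?_)
    (fun u hu u' hu' => hG.card_common_erase_eq_one (hU u hu) (hU u' hu'))
    (fun u hu u' hu' u'' hu'' => hG.disjoint_common_erase (hU u hu) (hU u' hu') (hU u'' hu''))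
  rw [card_erase_of_mem ((mem_neighborFinset G u v).2 (hU u hu).symm),
    card_neighborFinset_eq_degree, hd]

theorem extNbhd_insert {v : V} {U : Finset V} (hU : ∀ u ∈ U, G.Adj v u) :
    extNbhd G ↑(insert v U) =
      ↑((G.neighborFinset v \ U) ∪ U.biUnion fun u => (G.neighborFinset u).erase v) := by
  ext w
  simp only [extNbhd, coe_insert, Set.mem_insert_iff, mem_coe, Set.mem_ofPred_eq,
    exists_eq_or_imp, coe_union, coe_sdiff, coe_biUnion, Set.mem_union, Set.mem_sdiff,
    mem_neighborFinset, Set.mem_iUnion, coe_erase, Set.mem_singleton_iff, exists_prop]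
  constructor
  · rintro ⟨hw, hvw | ⟨u, hu, huw⟩⟩
    · exact Or.inl ⟨hvw, fun h => hw (Or.inr h)⟩
    · exact Or.inr ⟨u, hu, huw, fun h => hw (Or.inl h)⟩
  · rintro (⟨hvw, hwU⟩ | ⟨u, hu, huw, hwv⟩)
    · exact ⟨fun h => h.elim (fun h => hvw.ne h.symm) hwU, Or.inl hvw⟩
    · refine ⟨fun h => h.elim hwv fun hw => ?_, Or.inr ⟨u, hu, huw⟩⟩
      exact hG.not_adj_of_adj_of_adj (hU w hw).symm (hU u hu) huw.symm

theorem ncard_extNbhd_insert {v : V} {U : Finset V} (hU : ∀ u ∈ U, G.Adj v u) :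
    (extNbhd G ↑(insert v U)).ncard =
      #(G.neighborFinset v \ U) + #(U.biUnion fun u => (G.neighborFinset u).erase v) := by
  rw [hG.extNbhd_insert hU, Set.ncard_coe_finset, card_union_of_disjoint]
  refine Finset.disjoint_left.2 fun w hw hw' => ?_
  obtain ⟨u, hu, huw⟩ := mem_biUnion.1 hw'
  exact hG.not_adj_of_adj_of_adj (hU u hu).symm ((mem_neighborFinset G v w).1 (mem_sdiff.1 hw).1)
    ((mem_neighborFinset G u w).1 (mem_of_mem_erase huw))

theorem ncard_extNbhd_add_choose_two {d : ℕ} (hd : G.IsRegularOfDegree d) {v : V}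
    {S : Finset V} (hv : v ∈ S) (hS : ∀ u ∈ S, u ≠ v → G.Adj v u) :
    (extNbhd G ↑S).ncard + (#S + 1).choose 2 = #S * d + 1 := by
  obtain ⟨U, hvU, rfl⟩ : ∃ U, v ∉ U ∧ S = insert v U :=
    ⟨S.erase v, notMem_erase v S, (insert_erase hv).symm⟩
  have hU : ∀ u ∈ U, G.Adj v u := fun u hu =>
    hS u (mem_insert_of_mem hu) (ne_of_mem_of_not_mem hu hvU)
  have hUv : U ⊆ G.neighborFinset v := fun u hu => (mem_neighborFinset G v u).2 (hU u hu)
  have hrest : #(G.neighborFinset v \ U) + #U = d := by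
    rw [card_sdiff_add_card_eq_card hUv, card_neighborFinset_eq_degree, hd]
  have hmul : #U * (d - 1) + #U = #U * d := by
    rcases d with _ | d
    · simp [show #U = 0 by omega]
    · simp [Nat.mul_succ]
  have hchoose : (#U + 2).choose 2 = (#U).choose 2 + 2 * #U + 1 := by
    simp only [Nat.choose_succ_succ, Nat.choose_one_right, Nat.choose_zero_right]
    ring
  have hfar := hG.card_biUnion_erase_add_choose_two hd hU
  rw [hG.ncard_extNbhd_insert hU, card_insert_of_notMem hvU, hchoose]
  linarith

end IsRectagraph

end SimpleGraph

instance (n : ℕ) : DecidableRel (foldedCube n).Adj :=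
  fun _ _ => decidable_of_iff' _ (SimpleGraph.fromRel_adj _ _ _)

/-! Relative to a base vertex `x`, `diffSet x` and `flipAt x` identify the vertices of
`foldedCube n` with `Finset (Fin n)`, under which `foldedCube n` becomes the Cayley graph of
`(Finset (Fin n), ∆)` with connection set `gens n` (`adj_iff`). -/

namespace FoldedCube

variable {n : ℕ}

def diffSet (x y : Fin n → Bool) : Finset (Fin n) := univ.filter fun i => x i ≠ y i

def flipAt (x : Fin n → Bool) (s : Finset (Fin n)) : Fin n → Bool :=
  fun i => xor (x i) (decide (i ∈ s))

theorem diffSet_comm (x y : Fin n → Bool) : diffSet x y = diffSet y x := by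
  simp only [diffSet, ne_comm]

theorem diffSet_symmDiff_diffSet (x y z : Fin n → Bool) :
    diffSet x y ∆ diffSet y z = diffSet x z := by
  ext i
  simp only [diffSet, mem_symmDiff, mem_filter, mem_univ, true_and]
  cases x i <;> cases y i <;> cases z i <;> decide

theorem diffSet_eq_empty {x y : Fin n → Bool} : diffSet x y = ∅ ↔ x = y := by
  simp [diffSet, filter_eq_empty_iff, funext_iff]

theorem eq_of_diffSet_eq_diffSet {x w y : Fin n → Bool} (h : diffSet x w = diffSet w y) :
    x = y := by
  rw [← diffSet_eq_empty, ← diffSet_symmDiff_diffSet x w y, h, symmDiff_self, bot_eq_empty]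

theorem diffSet_flipAt (x : Fin n → Bool) (s : Finset (Fin n)) : diffSet x (flipAt x s) = s := by
  ext i
  rw [diffSet, mem_filter, flipAt]
  cases x i <;> by_cases hi : i ∈ s <;> simp [hi]

theorem flipAt_diffSet (x y : Fin n → Bool) : flipAt x (diffSet x y) = y := by
  funext i
  simp only [flipAt, diffSet, mem_filter, mem_univ, true_and]
  cases x i <;> cases y i <;> decide

theorem diffSet_injective (x : Fin n → Bool) : Function.Injective (diffSet x) :=
  Function.LeftInverse.injective (flipAt_diffSet x)

def gens (n : ℕ) : Finset (Finset (Fin n)) := insert univ (univ.image singleton)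

theorem mem_gens {s : Finset (Fin n)} : s ∈ gens n ↔ s = univ ∨ ∃ i, s = {i} := by
  simp [gens, eq_comm]

theorem card_gens (hn : 2 ≤ n) : #(gens n) = n + 1 := by
  rw [gens, card_insert_of_notMem, card_image_of_injective _ singleton_injective, card_univ,
    Fintype.card_fin]
  intro h
  obtain ⟨i, -, hi⟩ := mem_image.1 h
  have := congrArg card hi
  simp only [card_singleton, card_univ, Fintype.card_fin] at this
  omega

theorem empty_notMem_gens (hn : 1 ≤ n) : ∅ ∉ gens n := by
  rw [mem_gens]
  rintro (h | ⟨i, h⟩)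
  · exact (univ_nonempty_iff.2 ⟨⟨0, hn⟩⟩).ne_empty h.symm
  · exact singleton_ne_empty i h.symm

theorem adj_iff (hn : 1 ≤ n) {x y : Fin n → Bool} :
    (foldedCube n).Adj x y ↔ diffSet x y ∈ gens n := by
  have hrel : ∀ a b : Fin n → Bool, (#(univ.filter fun i => a i ≠ b i) = 1 ∨ ∀ i, a i ≠ b i) ↔
      diffSet a b ∈ gens n := by
    intro a b
    rw [mem_gens, ← card_eq_one, diffSet, filter_eq_self]
    simp only [mem_univ, true_implies, or_comm]
  rw [foldedCube, SimpleGraph.fromRel_adj, hrel, hrel, diffSet_comm y x, or_self,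
    and_iff_right_iff_imp]
  rintro h rfl
  rw [diffSet_eq_empty.2 rfl] at h
  exact empty_notMem_gens hn h

theorem card_of_mem_gens {s : Finset (Fin n)} (hs : s ∈ gens n) : #s = 1 ∨ #s = n := by
  rcases mem_gens.1 hs with rfl | ⟨i, rfl⟩ <;> simp

theorem card_symmDiff_of_mem_gens {s t : Finset (Fin n)} (hs : s ∈ gens n) (ht : t ∈ gens n)
    (hst : s ≠ t) : #(s ∆ t) = if s = univ ∨ t = univ then n - 1 else 2 := by
  rcases mem_gens.1 hs with rfl | ⟨i, rfl⟩ <;> rcases mem_gens.1 ht with rfl | ⟨j, rfl⟩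
  · exact absurd rfl hst
  · simp [← top_eq_univ, hnot_eq_compl, card_compl]
  · simp [← top_eq_univ, hnot_eq_compl, card_compl]
  · have hij : i ≠ j := fun h => hst (h ▸ rfl)
    have hi : ({i} : Finset (Fin n)) ≠ univ := fun h => hij (mem_singleton.1 (h ▸ mem_univ j)).symm
    have hj : ({j} : Finset (Fin n)) ≠ univ := fun h => hij (mem_singleton.1 (h ▸ mem_univ i))
    rw [(disjoint_singleton.2 hij).symmDiff_eq_sup, sup_eq_union, if_neg (by tauto)]
    exact card_pair hij

theorem symmDiff_notMem_gens (hn : 4 ≤ n) {s t : Finset (Fin n)} (hs : s ∈ gens n)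
    (ht : t ∈ gens n) : s ∆ t ∉ gens n := by
  intro hst
  by_cases heq : s = t
  · rw [heq, symmDiff_self] at hst
    exact empty_notMem_gens (by omega) hst
  · have := card_symmDiff_of_mem_gens hs ht heq
    split_ifs at this <;> rcases card_of_mem_gens hst with h | h <;> omega

-- `4 ≤ n` separates the two possible sizes `2` and `n - 1` of `s ∆ t`, so the sizes of the two
-- sides tell whether `univ` occurs on each side.
theorem eq_or_eq_of_symmDiff_eq (hn : 4 ≤ n) {s t u w : Finset (Fin n)} (hs : s ∈ gens n)
    (ht : t ∈ gens n) (hu : u ∈ gens n) (hw : w ∈ gens n) (h : s ∆ t = u ∆ w) (hst : s ≠ t) :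
    s = u ∨ s = w := by
  have huw : u ≠ w := by
    rintro rfl
    rw [symmDiff_self, symmDiff_eq_bot] at h
    exact hst h
  have hcard := card_symmDiff_of_mem_gens hs ht hst
  rw [h, card_symmDiff_of_mem_gens hu hw huw] at hcard
  have huniv : (s = univ ∨ t = univ) ↔ (u = univ ∨ w = univ) := by
    split_ifs at hcard <;> first | tauto | omega
  rcases mem_gens.1 hs with rfl | ⟨i, rfl⟩
  · exact (huniv.1 (Or.inl rfl)).imp Eq.symm Eq.symm
  rcases mem_gens.1 ht with rfl | ⟨j, rfl⟩
  · rcases huniv.1 (Or.inr rfl) with rfl | rfl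
    · exact Or.inr (symmDiff_right_injective _ ((symmDiff_comm _ _).trans h))
    · exact Or.inl (symmDiff_left_injective _ h)
  have hsingle : ∀ k : Fin n, ({k} : Finset (Fin n)) ≠ univ := fun k hk => by
    have := congrArg card hk
    simp only [card_singleton, card_univ, Fintype.card_fin] at this
    omega
  have hnot_univ : ¬(u = univ ∨ w = univ) := fun h' => (huniv.2 h').elim (hsingle i) (hsingle j)
  obtain ⟨k, rfl⟩ := (mem_gens.1 hu).resolve_left fun h' => hnot_univ (Or.inl h')
  obtain ⟨l, rfl⟩ := (mem_gens.1 hw).resolve_left fun h' => hnot_univ (Or.inr h')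
  have hi : i ∈ ({k} : Finset (Fin n)) ∆ {l} := h ▸ mem_symmDiff.2 (Or.inl ⟨mem_singleton_self i,
    fun hij => hst (by rw [mem_singleton.1 hij])⟩)
  simp only [mem_symmDiff, mem_singleton] at hi
  rcases hi with ⟨rfl, -⟩ | ⟨rfl, -⟩ <;> simp

theorem isRegularOfDegree (hn : 2 ≤ n) : (foldedCube n).IsRegularOfDegree (n + 1) := by
  intro x
  rw [← SimpleGraph.card_neighborFinset_eq_degree, ← card_gens hn]
  refine card_nbij' (diffSet x) (flipAt x) (fun w hw => ?_) (fun s hs => ?_)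
    (fun w _ => flipAt_diffSet x w) (fun s _ => diffSet_flipAt x s)
  · exact (adj_iff (by omega)).1 ((SimpleGraph.mem_neighborFinset _ _ _).1 hw)
  · rw [mem_coe, SimpleGraph.mem_neighborFinset, adj_iff (by omega), diffSet_flipAt]
    exact hs

theorem neighborFinset_inter_eq_pair (hn : 4 ≤ n) {x y z : Fin n → Bool} (hxy : x ≠ y)
    (hxz : (foldedCube n).Adj x z) (hyz : (foldedCube n).Adj y z) :
    (foldedCube n).neighborFinset x ∩ (foldedCube n).neighborFinset y =
      {z, flipAt x (diffSet y z)} := by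
  have hadj : ∀ {a b : Fin n → Bool}, (foldedCube n).Adj a b ↔ diffSet a b ∈ gens n :=
    adj_iff (by omega)
  rw [hadj] at hxz hyz
  set z' := flipAt x (diffSet y z)
  have hxz' : diffSet x z' = diffSet y z := diffSet_flipAt x _
  have hyz' : diffSet y z' = diffSet x z := by
    rw [← diffSet_symmDiff_diffSet y x z', hxz', diffSet_comm y x, diffSet_symmDiff_diffSet]
  ext w
  simp only [mem_inter, SimpleGraph.mem_neighborFinset, hadj, mem_insert, mem_singleton]
  constructor
  · rintro ⟨hxw, hyw⟩
    rw [diffSet_comm] at hyw hyz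
    rcases eq_or_eq_of_symmDiff_eq hn hxw hyw hxz hyz
      (by rw [diffSet_symmDiff_diffSet, diffSet_symmDiff_diffSet])
      fun h => hxy (eq_of_diffSet_eq_diffSet h) with h | h
    · exact Or.inl (diffSet_injective x h)
    · exact Or.inr (diffSet_injective x (by rw [h, hxz', diffSet_comm]))
  · rintro (rfl | rfl)
    exacts [⟨hxz, hyz⟩, ⟨hxz' ▸ hyz, hyz' ▸ hxz⟩]

theorem ne_flipAt_diffSet {x y z : Fin n → Bool} (hxy : x ≠ y) : z ≠ flipAt x (diffSet y z) :=
  fun h => hxy (eq_of_diffSet_eq_diffSet (w := z)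
    (by rw [diffSet_comm z y, ← diffSet_flipAt x (diffSet y z), ← h]))

theorem isRectagraph (hn : 4 ≤ n) : (foldedCube n).IsRectagraph := by
  refine ⟨fun x y z hxy hyz hxz => ?_, fun x y hxy => ?_⟩
  · rw [adj_iff (by omega)] at hxy hyz hxz
    exact symmDiff_notMem_gens hn hxy hyz (diffSet_symmDiff_diffSet x y z ▸ hxz)
  rcases eq_empty_or_nonempty ((foldedCube n).neighborFinset x ∩ (foldedCube n).neighborFinset y)
    with hN | ⟨z, hz⟩
  · exact Or.inl (card_eq_zero.2 hN)
  · rw [mem_inter, SimpleGraph.mem_neighborFinset, SimpleGraph.mem_neighborFinset] at hz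
    rw [neighborFinset_inter_eq_pair hn hxy hz.1 hz.2, card_pair (ne_flipAt_diffSet hxy)]
    exact Or.inr rfl

end FoldedCube

theorem stmt9_general (n g : ℕ) (hn : 5 ≤ n)
    (v : Fin n → Bool) (V' : Finset (Fin n → Bool)) (hv : v ∈ V')
    (hadj : ∀ u ∈ V', u ≠ v → (foldedCube n).Adj v u) (hV' : V'.card = g) :
    ((extNbhd (foldedCube n) (↑V' : Set (Fin n → Bool))).ncard : ℤ) =
      (g : ℤ) * (n + 1) - g * (g + 1) / 2 + 1 := by
  have hcount := (FoldedCube.isRectagraph (by omega)).ncard_extNbhd_add_choose_two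
    (FoldedCube.isRegularOfDegree (by omega)) hv hadj
  rw [hV'] at hcount
  have hchoose : (((g + 1).choose 2 : ℕ) : ℤ) = g * (g + 1) / 2 := by
    rw [Nat.choose_two_right]
    push_cast
    ring_nf
  have hcount' := congrArg (Nat.cast : ℕ → ℤ) hcount
  push_cast at hcount'
  rw [← hchoose]
  linarith

theorem stmt9 (n g : ℕ) (hn : 5 ≤ n) (hg1 : 1 ≤ g) (hg2 : g ≤ n + 2)
    (v : Fin n → Bool) (V' : Finset (Fin n → Bool)) (hv : v ∈ V')
    (hadj : ∀ u ∈ V', u ≠ v → (foldedCube n).Adj v u) (hV' : V'.card = g) :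
    ((extNbhd (foldedCube n) (↑V' : Set (Fin n → Bool))).ncard : ℤ) =
      (g : ℤ) * (n + 1) - g * (g + 1) / 2 + 1 :=
  stmt9_general n g hn v V' hv hadj hV'
end

section
/- For n ≥ 8 and 1 ≤ g ≤ n+1, the (g+1)-component connectivity of the folded hypercube satisfies cκ_{g+1}(FQ_n) ≤ g(n+1) − g(g+1)/2 + 1. -/
/-- The `g`-component connectivity: minimum size of a vertex set whose deletion
leaves a graph with at least `g` connected components. -/
noncomputable def compConn {V : Type*} [Fintype V] [DecidableEq V]
    (G : SimpleGraph V) (g : ℕ) : ℕ :=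
  sInf {k | ∃ F : Finset V, F.card = k ∧
    g ≤ Nat.card ((G.induce ((↑F : Set V)ᶜ)).ConnectedComponent)}

open Finset


/-- generator vectors: indicator of coordinate k, or all-ones when k = n -/
def gen (n : ℕ) (k : Fin (n+1)) : Fin n → Bool := fun t => decide ((t:ℕ) = (k:ℕ) ∨ (k:ℕ) = n)

def xr {n : ℕ} (u v : Fin n → Bool) : Fin n → Bool := fun t => xor (u t) (v t)

def wt {n : ℕ} (x : Fin n → Bool) : ℕ := (Finset.univ.filter (fun t => x t = true)).card

lemma xor_decide (p q : Prop) [Decidable p] [Decidable q] :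
    xor (decide p) (decide q) = true ↔ ¬(p ↔ q) := by
  by_cases hp : p <;> by_cases hq : q <;> simp [hp, hq]

lemma wt_zero {n : ℕ} : wt (fun _ : Fin n => false) = 0 := by simp [wt]

lemma wt_gen_lt {n : ℕ} {k : Fin (n+1)} (h : (k:ℕ) < n) : wt (gen n k) = 1 := by
  have he : (univ.filter (fun t : Fin n => gen n k t = true)) = {⟨k, h⟩} := by
    ext t
    have ht := t.2
    simp [gen, Fin.ext_iff]
    omega
  rw [wt, he, card_singleton]

lemma wt_gen_last {n : ℕ} {k : Fin (n+1)} (h : (k:ℕ) = n) : wt (gen n k) = n := by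
  have he : (univ.filter (fun t : Fin n => gen n k t = true)) = univ := by
    ext t; simp [gen, h]
  rw [wt, he, card_univ, Fintype.card_fin]

lemma wt_gen {n : ℕ} (k : Fin (n+1)) : wt (gen n k) = 1 ∨ wt (gen n k) = n := by
  have := k.2
  rcases Nat.lt_or_ge (k:ℕ) n with h | h
  · exact Or.inl (wt_gen_lt h)
  · exact Or.inr (wt_gen_last (by omega))

lemma wt_xr_gen {n : ℕ} {a b : Fin (n+1)} (hab : (a:ℕ) < (b:ℕ)) :
    wt (xr (gen n a) (gen n b)) = 2 ∨ wt (xr (gen n a) (gen n b)) = n - 1 := by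
  have hb2 := b.2
  have ha : (a:ℕ) < n := by omega
  rcases Nat.lt_or_ge (b:ℕ) n with hb | hb
  · left
    have he : (univ.filter (fun t : Fin n => xr (gen n a) (gen n b) t = true))
        = {⟨a, ha⟩, ⟨b, hb⟩} := by
      ext t
      have ht := t.2
      simp [xr, gen, xor_decide, Fin.ext_iff]
      simp only [← Bool.decide_or, decide_eq_decide]
      omega
    rw [wt, he, card_insert_of_notMem (by simp [Fin.ext_iff]; omega), card_singleton]
  · right
    have hbn : (b:ℕ) = n := by omega
    have he : (univ.filter (fun t : Fin n => xr (gen n a) (gen n b) t = true))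
        = univ.erase ⟨a, ha⟩ := by
      ext t
      have ht := t.2
      simp [xr, gen, xor_decide, Fin.ext_iff, hbn]
      omega
    rw [wt, he, card_erase_of_mem (mem_univ _), card_univ, Fintype.card_fin]

lemma gen_inj {n : ℕ} (hn2 : 2 ≤ n) {a b : Fin (n+1)} (h : gen n a = gen n b) : a = b := by
  have ha2 := a.2
  have hb2 := b.2
  rcases Nat.lt_or_ge (a:ℕ) n with ha | ha
  · rcases Nat.lt_or_ge (b:ℕ) n with hb | hb
    · have hc := congrFun h ⟨a, ha⟩
      simp [gen] at hc
      exact Fin.ext (by omega)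
    · have h1 := wt_gen_lt ha
      have h2 := wt_gen_last (n := n) (k := b) (by omega)
      rw [h] at h1; omega
  · rcases Nat.lt_or_ge (b:ℕ) n with hb | hb
    · have h1 := wt_gen_lt hb
      have h2 := wt_gen_last (n := n) (k := a) (by omega)
      rw [← h] at h1; omega
    · exact Fin.ext (by omega)

lemma isolated_eq {V : Type*} {G : SimpleGraph V} {a : V} (h : ∀ c, ¬ G.Adj a c) {b : V}
    (hab : G.connectedComponentMk a = G.connectedComponentMk b) : a = b := by
  obtain ⟨p⟩ := SimpleGraph.ConnectedComponent.exact hab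
  cases p with
  | nil => rfl
  | cons h' _ => exact absurd h' (h _)

lemma adj_form {n : ℕ} {u v : Fin n → Bool} (h : (foldedCube n).Adj u v) :
    ∃ k : Fin (n+1), v = xr u (gen n k) := by
  rw [foldedCube, SimpleGraph.fromRel_adj] at h
  obtain ⟨hne, h⟩ := h
  have h' : (univ.filter (fun i => u i ≠ v i)).card = 1 ∨ ∀ i, u i ≠ v i := by
    rcases h with h | h
    · exact h
    · rcases h with h | h
      · left
        have he : (univ.filter (fun i => u i ≠ v i)) = (univ.filter (fun i => v i ≠ u i)) := by
          ext t; simp [ne_comm]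
        rw [he]; exact h
      · exact Or.inr fun i => (h i).symm
  rcases h' with h1 | h2
  · obtain ⟨i, hi⟩ := Finset.card_eq_one.mp h1
    have hmem : ∀ t : Fin n, (u t ≠ v t) ↔ t = i := by
      intro t; rw [← Finset.mem_singleton, ← hi]; simp
    refine ⟨⟨(i:ℕ), by omega⟩, ?_⟩
    funext t
    rcases eq_or_ne t i with rfl | ht
    · have h1' : u t ≠ v t := (hmem t).mpr rfl
      have hg : gen n ⟨(t:ℕ), by omega⟩ t = true := by simp [gen]
      show v t = xor (u t) (gen n ⟨(t:ℕ), _⟩ t)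
      rw [hg]
      revert h1'; cases u t <;> cases v t <;> simp
    · have h1' : u t = v t := by
        by_contra hc; exact ht ((hmem t).mp hc)
      have ht' : (t:ℕ) ≠ (i:ℕ) := fun hh => ht (Fin.ext hh)
      have hi2 := i.2
      have hg : gen n ⟨(i:ℕ), by omega⟩ t = false := by
        simp [gen]; omega
      show v t = xor (u t) (gen n ⟨(i:ℕ), _⟩ t)
      rw [hg, Bool.xor_false]; exact h1'.symm
  · refine ⟨⟨n, by omega⟩, ?_⟩
    funext t
    have h2' := h2 t
    have hg : gen n ⟨n, by omega⟩ t = true := by simp [gen]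
    show v t = xor (u t) (gen n ⟨n, _⟩ t)
    rw [hg]
    revert h2'; cases u t <;> cases v t <;> simp

theorem stmt12 (n g : ℕ) (hn : 8 ≤ n) (hg1 : 1 ≤ g) (hg2 : g ≤ n + 1) :
    (compConn (foldedCube n) (g + 1) : ℤ) ≤ (g : ℤ) * (n + 1) - g * (g + 1) / 2 + 1 := by
  have hn2 : 2 ≤ n := by omega
  set e : Fin g → Fin (n+1) := fun i => Fin.castLE hg2 i with he_def
  set P : Finset (Fin g × Fin (n+1)) := Finset.univ.filter (fun p => (p.1:ℕ) < (p.2:ℕ)) with hP_def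
  set F : Finset (Fin n → Bool) :=
    insert (fun _ => false) (P.image (fun p => xr (gen n (e p.1)) (gen n p.2))) with hF_def
  have hF_wt : ∀ z ∈ F, wt z = 0 ∨ wt z = 2 ∨ wt z = n - 1 := by
    intro z hz
    rw [hF_def] at hz
    rcases Finset.mem_insert.mp hz with rfl | hz
    · exact Or.inl wt_zero
    · obtain ⟨p, hp, rfl⟩ := Finset.mem_image.mp hz
      have hlt : ((e p.1 : ℕ)) < (p.2 : ℕ) := by
        rw [hP_def] at hp
        have := (Finset.mem_filter.mp hp).2
        simpa [he_def] using this
      rcases wt_xr_gen hlt with h | h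
      · exact Or.inr (Or.inl h)
      · exact Or.inr (Or.inr h)
  have hxnotF : ∀ i : Fin g, gen n (e i) ∉ F := by
    intro i hi
    rcases hF_wt _ hi with h | h | h <;> rcases wt_gen (e i) with h2 | h2 <;> omega
  set y : Fin n → Bool := fun t => decide ((t:ℕ) < 3) with hy_def
  have hyw : wt y = 3 := by
    have he3 : (univ.filter (fun t : Fin n => y t = true)) =
        {(⟨0, by omega⟩ : Fin n), ⟨1, by omega⟩, ⟨2, by omega⟩} := by
      ext t; have := t.2; simp [hy_def, Fin.ext_iff]; omega
    rw [wt, he3, card_insert_of_notMem (by simp [Fin.ext_iff]),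
      card_insert_of_notMem (by simp [Fin.ext_iff]), card_singleton]
  have hynotF : y ∉ F := by
    intro hy; rcases hF_wt _ hy with h | h | h <;> omega
  have hnbr : ∀ (i : Fin g) z, (foldedCube n).Adj (gen n (e i)) z → z ∈ F := by
    intro i z hz
    obtain ⟨k, rfl⟩ := adj_form hz
    rw [hF_def]
    rcases Nat.lt_trichotomy (k:ℕ) ((e i : ℕ)) with hk | hk | hk
    · have hei : ((e i : ℕ)) = (i:ℕ) := by simp [he_def]
      have hkg : (k:ℕ) < g := by omega
      apply Finset.mem_insert_of_mem
      apply Finset.mem_image.mpr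
      refine ⟨(⟨(k:ℕ), hkg⟩, e i), ?_, ?_⟩
      · rw [hP_def]; simp [he_def]; omega
      · have hek : e ⟨(k:ℕ), hkg⟩ = k := Fin.ext (by simp [he_def])
        rw [hek]
        funext t; simp [xr, Bool.xor_comm]
    · apply Finset.mem_insert.mpr; left
      have hke : k = e i := Fin.ext (by omega)
      rw [hke]
      funext t; simp [xr]
    · apply Finset.mem_insert_of_mem
      apply Finset.mem_image.mpr
      refine ⟨(i, k), ?_, rfl⟩
      rw [hP_def]; simp [he_def]
      have hei : ((e i : ℕ)) = (i:ℕ) := by simp [he_def]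
      omega
  have hxmem : ∀ i : Fin g, gen n (e i) ∈ ((↑F : Set (Fin n → Bool))ᶜ) := by
    intro i; simp only [Set.mem_compl_iff, Finset.mem_coe]; exact hxnotF i
  have hymem : y ∈ ((↑F : Set (Fin n → Bool))ᶜ) := by
    simp only [Set.mem_compl_iff, Finset.mem_coe]; exact hynotF
  set G' := (foldedCube n).induce ((↑F : Set (Fin n → Bool))ᶜ) with hG'
  have hiso : ∀ (i : Fin g) (c : ↥((↑F : Set (Fin n → Bool))ᶜ)),
      ¬ G'.Adj ⟨gen n (e i), hxmem i⟩ c := by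
    intro i c hc
    have hadj : (foldedCube n).Adj (gen n (e i)) c.1 := hc
    exact c.2 (Finset.mem_coe.mpr (hnbr i c.1 hadj))
  have hinj : Function.Injective (fun j : Fin (g+1) =>
      if h : (j:ℕ) < g then G'.connectedComponentMk ⟨gen n (e ⟨(j:ℕ), h⟩), hxmem _⟩
      else G'.connectedComponentMk ⟨y, hymem⟩) := by
    intro j1 j2 hj
    dsimp only at hj
    by_cases h1 : (j1:ℕ) < g <;> by_cases h2 : (j2:ℕ) < g
    · rw [dif_pos h1, dif_pos h2] at hj
      have hsub := isolated_eq (hiso ⟨(j1:ℕ), h1⟩) hj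
      have hgen : gen n (e ⟨(j1:ℕ), h1⟩) = gen n (e ⟨(j2:ℕ), h2⟩) := congrArg Subtype.val hsub
      have hee := gen_inj hn2 hgen
      have hv : ((j1:ℕ)) = ((j2:ℕ)) := by
        have := congrArg Fin.val hee; simpa [he_def] using this
      exact Fin.ext hv
    · rw [dif_pos h1, dif_neg h2] at hj
      have hsub := isolated_eq (hiso ⟨(j1:ℕ), h1⟩) hj
      have hgen : gen n (e ⟨(j1:ℕ), h1⟩) = y := congrArg Subtype.val hsub
      have hw := congrArg wt hgen
      rw [hyw] at hw
      rcases wt_gen (e ⟨(j1:ℕ), h1⟩) with h | h <;> omega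
    · rw [dif_neg h1, dif_pos h2] at hj
      have hsub := isolated_eq (hiso ⟨(j2:ℕ), h2⟩) hj.symm
      have hgen : gen n (e ⟨(j2:ℕ), h2⟩) = y := congrArg Subtype.val hsub
      have hw := congrArg wt hgen
      rw [hyw] at hw
      rcases wt_gen (e ⟨(j2:ℕ), h2⟩) with h | h <;> omega
    · have hb1 := j1.2; have hb2 := j2.2
      exact Fin.ext (by omega)
  have hcomp : g + 1 ≤ Nat.card G'.ConnectedComponent := by
    have hle := Nat.card_le_card_of_injective _ hinj
    simpa using hle
  have hcc : compConn (foldedCube n) (g+1) ≤ F.card := by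
    unfold compConn
    exact Nat.sInf_le ⟨F, rfl, hcomp⟩
  have hPfib : ∀ i : Fin g, (P.filter (fun p => p.1 = i)).card = n - (i:ℕ) := by
    intro i
    have he2 : P.filter (fun p => p.1 = i) = {i} ×ˢ Finset.Ioi (e i) := by
      ext p
      rw [hP_def]
      simp only [Finset.mem_filter, Finset.mem_univ, true_and, Finset.mem_product,
        Finset.mem_singleton, Finset.mem_Ioi, Fin.lt_def]
      constructor
      · rintro ⟨hlt, rfl⟩
        exact ⟨rfl, by simpa [he_def] using hlt⟩
      · rintro ⟨rfl, hlt⟩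
        exact ⟨by simpa [he_def] using hlt, rfl⟩
    rw [he2, Finset.card_product, card_singleton, one_mul, Fin.card_Ioi]
    simp [he_def]
  have hPcard : P.card = ∑ i ∈ Finset.range g, (n - i) := by
    rw [Finset.card_eq_sum_card_fiberwise (f := Prod.fst) (t := univ) (fun x _ => mem_univ _)]
    rw [← Fin.sum_univ_eq_sum_range]
    exact Finset.sum_congr rfl fun i _ => hPfib i
  have hsum1 : ∑ i ∈ Finset.range g, (n - i) + ∑ i ∈ Finset.range g, i = g * n := by
    rw [← Finset.sum_add_distrib]
    have hcg : ∀ i ∈ Finset.range g, (n - i) + i = n := by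
      intro i hi; have := Finset.mem_range.mp hi; omega
    rw [Finset.sum_congr rfl hcg, Finset.sum_const, Finset.card_range, smul_eq_mul]
  set S : ℕ := ∑ i ∈ Finset.range g, i with hS_def
  have hsum2 := Finset.sum_range_id_mul_two g
  rw [← hS_def] at hsum2
  have hFcard : F.card ≤ P.card + 1 := by
    rw [hF_def]
    calc (insert (fun _ => false) (P.image (fun p => xr (gen n (e p.1)) (gen n p.2)))).card
        ≤ (P.image (fun p => xr (gen n (e p.1)) (gen n p.2))).card + 1 := Finset.card_insert_le _ _
      _ ≤ P.card + 1 := by gcongr; exact Finset.card_image_le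
  -- final arithmetic
  have e1 : (P.card : ℤ) + S = (g:ℤ) * n := by
    have hnat : P.card + ∑ i ∈ Finset.range g, i = g * n := by rw [hPcard]; exact hsum1
    exact_mod_cast hnat
  have e2 : (S : ℤ) * 2 = (g:ℤ) * ((g:ℤ) - 1) := by
    have := hsum2
    zify [hg1] at this
    exact this
  have hcc' : (compConn (foldedCube n) (g+1) : ℤ) ≤ (P.card:ℤ) + 1 := by
    exact_mod_cast le_trans hcc hFcard
  obtain ⟨c, hc⟩ := Int.even_mul_succ_self (g:ℤ)
  have hq : (g:ℤ) * ((g:ℤ) + 1) / 2 = c := by omega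
  have r1 : (g:ℤ) * ((g:ℤ) + 1) = (g:ℤ) * ((g:ℤ) - 1) + 2 * g := by ring
  have r2 : (g:ℤ) * ((n:ℤ) + 1) = (g:ℤ) * n + g := by ring
  rw [hq]
  linarith
end

section
/- For n ≥ 4 and any vertex set V' of the folded hypercube FQ_n with |V'| = 2 consisting of two adjacent vertices, |N_{FQ_n}(V')| = 2n exactly. -/
namespace FoldedAux

open Finset
open scoped symmDiff

variable {n : ℕ}

/-- The set of coordinates where `u` and `v` differ. -/
def diffs (u v : Fin n → Bool) : Finset (Fin n) :=
  Finset.univ.filter (fun i => u i ≠ v i)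

lemma diffs_comm (u v : Fin n → Bool) : diffs u v = diffs v u := by
  ext i; simp [diffs, ne_comm]

lemma diffs_symmDiff (u v x : Fin n → Bool) :
    diffs u v = (diffs u x) ∆ (diffs x v) := by
  ext i
  simp only [diffs, Finset.mem_symmDiff, Finset.mem_filter, Finset.mem_univ, true_and]
  cases u i <;> cases v i <;> cases x i <;> simp

/-- The key "triangle" identity coming from the symmetric difference. -/
lemma tri (u v x : Fin n → Bool) :
    (diffs u v).card + 2 * (diffs u x ∩ diffs x v).card
      = (diffs u x).card + (diffs x v).card := by
  have h1 := Finset.card_union_add_card_inter (diffs u x) (diffs x v)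
  have h2 : (diffs u v).card + (diffs u x ∩ diffs x v).card
      = (diffs u x ∪ diffs x v).card := by
    rw [diffs_symmDiff u v x]
    have hs : (diffs u x) ∆ (diffs x v)
        = (diffs u x ∪ diffs x v) \ (diffs u x ∩ diffs x v) := by
      ext a
      simp only [Finset.mem_symmDiff, Finset.mem_sdiff, Finset.mem_union, Finset.mem_inter]
      tauto
    rw [hs]
    exact Finset.card_sdiff_add_card_eq_card Finset.inter_subset_union
  omega

lemma adj_iff (u v : Fin n → Bool) :
    (foldedCube n).Adj u v ↔ u ≠ v ∧ ((diffs u v).card = 1 ∨ ∀ i, u i ≠ v i) := by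
  rw [foldedCube, SimpleGraph.fromRel_adj]
  constructor
  · rintro ⟨h, h' | h'⟩
    · exact ⟨h, h'⟩
    · refine ⟨h, ?_⟩
      rcases h' with h' | h'
      · left
        rw [show (diffs u v : Finset (Fin n))
            = Finset.univ.filter (fun i => v i ≠ u i) by ext i; simp [diffs, ne_comm]]
        exact h'
      · right; intro i; exact (h' i).symm
  · rintro ⟨h, h'⟩; exact ⟨h, Or.inl h'⟩

instance : DecidableRel (foldedCube n).Adj := fun u v =>
  decidable_of_iff _ (adj_iff u v).symm

lemma forall_ne_iff (w x : Fin n → Bool) :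
    (∀ i, w i ≠ x i) ↔ x = fun i => !w i := by
  constructor
  · intro h; funext i; have h' := h i
    revert h'; cases w i <;> cases x i <;> simp
  · rintro rfl i
    simp only []
    cases w i <;> simp

lemma card_diffs_eq_n_iff (w x : Fin n → Bool) :
    (diffs w x).card = n ↔ ∀ i, w i ≠ x i := by
  constructor
  · intro h i
    have hu : diffs w x = Finset.univ := by
      apply Finset.eq_univ_of_card
      simpa using h
    have : i ∈ diffs w x := hu ▸ Finset.mem_univ i
    simpa [diffs] using this
  · intro h
    have hu : diffs w x = Finset.univ := by
      apply Finset.eq_univ_of_forall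
      intro i; simp [diffs, h i]
    rw [hu]; simp

lemma card_diffs_eq_one_iff (w x : Fin n → Bool) :
    (diffs w x).card = 1 ↔ ∃ i, x = Function.update w i (!w i) := by
  constructor
  · intro h
    obtain ⟨i, hi⟩ := Finset.card_eq_one.mp h
    refine ⟨i, funext fun j => ?_⟩
    by_cases hj : j = i
    · subst hj
      have hm : j ∈ diffs w x := hi ▸ Finset.mem_singleton_self j
      simp only [diffs, Finset.mem_filter, Finset.mem_univ, true_and] at hm
      rw [Function.update_self]
      revert hm; cases w j <;> cases x j <;> simp
    · have hm : j ∉ diffs w x := by rw [hi]; simp [hj]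
      simp only [diffs, Finset.mem_filter, Finset.mem_univ, true_and, not_not] at hm
      rw [Function.update_of_ne hj, hm]
  · rintro ⟨i, rfl⟩
    have hd : diffs w (Function.update w i (!w i)) = {i} := by
      ext j
      by_cases hj : j = i
      · subst hj
        simp only [diffs, Finset.mem_filter, Finset.mem_univ, true_and,
          Function.update_self, Finset.mem_singleton]
        cases w j <;> simp
      · simp [diffs, Function.update_of_ne hj, hj]
    rw [hd]; simp

lemma adj_iff' (w x : Fin n → Bool) (hn : 2 ≤ n) :
    (foldedCube n).Adj w x ↔
      (x = fun i => !w i) ∨ ∃ i, x = Function.update w i (!w i) := by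
  rw [adj_iff, card_diffs_eq_one_iff, forall_ne_iff]
  constructor
  · rintro ⟨_, h | h⟩
    · exact Or.inr h
    · exact Or.inl h
  · intro h
    have i0 : Fin n := ⟨0, by omega⟩
    have hne : w ≠ x := by
      rcases h with h | ⟨i, h⟩
      · intro he; subst h
        have h1 := congrFun he i0
        revert h1; cases w i0 <;> simp
      · intro he; subst h
        have h1 := congrFun he i
        rw [Function.update_self] at h1
        revert h1; cases w i <;> simp
    exact ⟨hne, h.symm⟩

lemma degree_eq (hn : 2 ≤ n) (w : Fin n → Bool) :
    ((foldedCube n).neighborFinset w).card = n + 1 := by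
  have himage :
      (foldedCube n).neighborFinset w =
        insert (fun i => !w i)
          ((Finset.univ : Finset (Fin n)).image fun i => Function.update w i (!w i)) := by
    ext x
    rw [SimpleGraph.mem_neighborFinset, adj_iff' w x hn]
    simp [eq_comm, or_comm]
  rw [himage]
  have hnotmem : (fun i => !w i) ∉
      ((Finset.univ : Finset (Fin n)).image fun i => Function.update w i (!w i)) := by
    simp only [Finset.mem_image, Finset.mem_univ, true_and]
    rintro ⟨i, hi⟩
    have : Nontrivial (Fin n) := Fin.nontrivial_iff_two_le.mpr hn
    obtain ⟨j, hj⟩ := exists_ne i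
    have h1 := congrFun hi j
    rw [Function.update_of_ne hj] at h1
    revert h1; cases w j <;> simp
  have hinj : Function.Injective (fun i => Function.update w i (!w i)) := by
    intro i j hij
    by_contra hne
    have h1 := congrFun hij i
    simp only [Function.update_self, Function.update_of_ne hne] at h1
    revert h1; cases w i <;> simp
  rw [Finset.card_insert_of_notMem hnotmem, Finset.card_image_of_injective _ hinj,
    Finset.card_univ, Fintype.card_fin]

lemma no_common_neighbor (hn : 4 ≤ n) (u v x : Fin n → Bool)
    (huv : (foldedCube n).Adj u v) (hux : (foldedCube n).Adj u x)
    (hvx : (foldedCube n).Adj v x) : False := by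
  obtain ⟨huvne, huv'⟩ := (adj_iff u v).mp huv
  obtain ⟨_, hux'⟩ := (adj_iff u x).mp hux
  obtain ⟨_, hvx'⟩ := (adj_iff v x).mp hvx
  by_cases hcu : ∀ i, u i ≠ x i
  · by_cases hcv : ∀ i, v i ≠ x i
    · apply huvne
      funext i
      have h1 := hcu i; have h2 := hcv i
      revert h1 h2; cases u i <;> cases v i <;> cases x i <;> simp
    · -- card (diffs u x) = n, card (diffs v x) = 1
      have ha : (diffs u x).card = n := (card_diffs_eq_n_iff u x).mpr hcu
      have hb : (diffs v x).card = 1 := hvx'.resolve_right hcv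
      have hc : (diffs u v).card = 1 ∨ (diffs u v).card = n := by
        rcases huv' with h | h
        · exact Or.inl h
        · exact Or.inr ((card_diffs_eq_n_iff u v).mpr h)
      have t1 := tri u v x
      have t2 := tri u x v
      rw [diffs_comm x v] at t1
      omega
  · have ha : (diffs u x).card = 1 := hux'.resolve_right hcu
    have hb : (diffs v x).card = 1 ∨ (diffs v x).card = n := by
      rcases hvx' with h | h
      · exact Or.inl h
      · exact Or.inr ((card_diffs_eq_n_iff v x).mpr h)
    have hc : (diffs u v).card = 1 ∨ (diffs u v).card = n := by
      rcases huv' with h | h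
      · exact Or.inl h
      · exact Or.inr ((card_diffs_eq_n_iff u v).mpr h)
    have t1 := tri u v x
    have t2 := tri v x u
    rw [diffs_comm x v] at t1
    rw [diffs_comm v u] at t2
    omega

end FoldedAux

open FoldedAux Finset in
theorem stmt19 (n : ℕ) (hn : 4 ≤ n) (u v : Fin n → Bool)
    (huv : (foldedCube n).Adj u v) :
    (extNbhd (foldedCube n) ({u, v} : Set (Fin n → Bool))).ncard = 2 * n := by
  set G := foldedCube n with hG
  have hset : extNbhd G ({u, v} : Set (Fin n → Bool)) =
      ↑(((G.neighborFinset u ∪ G.neighborFinset v) \ {u, v} : Finset (Fin n → Bool))) := by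
    ext x
    simp only [extNbhd, Set.mem_setOf_eq, Set.mem_insert_iff, Set.mem_singleton_iff,
      Finset.coe_sdiff, Set.mem_diff, Finset.coe_union, Set.mem_union, Finset.mem_coe,
      SimpleGraph.mem_neighborFinset, Finset.coe_insert, Finset.coe_singleton]
    constructor
    · rintro ⟨hx, w, hw, hadj⟩
      rcases hw with rfl | rfl
      · exact ⟨Or.inl hadj, hx⟩
      · exact ⟨Or.inr hadj, hx⟩
    · rintro ⟨hadj, hx⟩
      rcases hadj with h | h
      · exact ⟨hx, u, Or.inl rfl, h⟩
      · exact ⟨hx, v, Or.inr rfl, h⟩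
  rw [hset, Set.ncard_coe_finset]
  have hdisj : Disjoint (G.neighborFinset u) (G.neighborFinset v) := by
    rw [Finset.disjoint_left]
    intro x hxu hxv
    exact no_common_neighbor hn u v x huv
      (SimpleGraph.mem_neighborFinset _ _ _ |>.mp hxu)
      (SimpleGraph.mem_neighborFinset _ _ _ |>.mp hxv)
  have hsub : ({u, v} : Finset (Fin n → Bool)) ⊆ G.neighborFinset u ∪ G.neighborFinset v := by
    intro x hx
    rcases Finset.mem_insert.mp hx with rfl | hx
    · exact Finset.mem_union_right _ ((SimpleGraph.mem_neighborFinset _ _ _).mpr huv.symm)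
    · rw [Finset.mem_singleton] at hx; subst hx
      exact Finset.mem_union_left _ ((SimpleGraph.mem_neighborFinset _ _ _).mpr huv)
  rw [Finset.card_sdiff_of_subset hsub, Finset.card_union_of_disjoint hdisj,
    degree_eq (by omega) u, degree_eq (by omega) v,
    Finset.card_insert_of_notMem (by simpa using huv.ne), Finset.card_singleton]
  omega
end
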